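/- Let X ∈ ℝ^{m×n}, b ∈ ℝ^m, λ > 0, let p₁ be a norm on ℝⁿ, and let p₂ : ℝⁿ → ℝ be a convex differentiable function. Define g(β) = ‖Xβ − b‖ + λ p₁(β) − p₂(β), and for σ ≥ 0, τ ≥ 0 and β̄ ∈ ℝⁿ define h(β; σ, τ, β̄) = ‖Xβ − b‖ + λ p₁(β) − p₂(β̄) − ⟨∇p₂(β̄), β − β̄⟩ + (σ/2)‖β − β̄‖² + (τ/2)‖Xβ − Xβ̄‖². Then β̄ is a d-stationary point of g (i.e., the one-sided directional derivative g'(β̄; d) = lim_{t↓0} (g(β̄ + t d) − g(β̄))/t is nonnegative for every d ∈ ℝⁿ) if and only if there exist σ ≥ 0 and τ ≥ 0 such that β̄ is a global minimizer of h(·; σ, τ, β̄) over ℝⁿ. -/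

import Mathlib

/-!
With `c = ‖X · - b‖ + λ p₁` convex, the difference quotients of `g = c - p₂` converge to
`c'(β̄; d) - ⟪∇p₂ β̄, d⟫`, and a convex function lies above its directional derivatives. Hence
`β̄` is d-stationary exactly when `∇p₂ β̄` is a subgradient of `c` at `β̄`, which is the statement
that `β̄` minimises `h(·; 0, 0, β̄)`. Conversely, along `β̄ + t d` the proximal terms of `h` are
`O(t²)`, so they do not affect the first-order inequality and a minimiser of `h(·; σ, τ, β̄)`
still satisfies the subgradient inequality.
-/

open scoped RealInnerProductSpace

noncomputable section

/-- A function `p` is a norm on a real vector space. -/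
def IsNorm {E : Type*} [AddCommGroup E] [Module ℝ E] (p : E → ℝ) : Prop :=
  (∀ x y, p (x + y) ≤ p x + p y) ∧ (∀ (c : ℝ) (x : E), p (c • x) = |c| * p x) ∧
    (∀ x, p x = 0 ↔ x = 0)

/-- The dual norm `q_*(z) = sup {⟨z, β⟩ : q β ≤ 1}`. -/
def dualNorm {ι : Type*} [Fintype ι] (q : EuclideanSpace ℝ ι → ℝ)
    (z : EuclideanSpace ℝ ι) : ℝ :=
  sSup {r : ℝ | ∃ β : EuclideanSpace ℝ ι, q β ≤ 1 ∧ r = ⟪z, β⟫}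

/-- `β_S`: the vector agreeing with `β` on `S` and zero on the complement. -/
def projS {n : ℕ} (S : Finset (Fin n)) (β : EuclideanSpace ℝ (Fin n)) :
    EuclideanSpace ℝ (Fin n) :=
  WithLp.toLp 2 (fun i => if i ∈ S then β i else 0)

/-- `β_{S̄}`: the vector agreeing with `β` on the complement of `S` and zero on `S`. -/
def projSc {n : ℕ} (S : Finset (Fin n)) (β : EuclideanSpace ℝ (Fin n)) :
    EuclideanSpace ℝ (Fin n) :=
  WithLp.toLp 2 (fun i => if i ∈ S then 0 else β i)

/-- `β^{S̄}`: the restriction of `β` to the complement of `S`. -/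
def restrC {n : ℕ} (S : Finset (Fin n)) (β : EuclideanSpace ℝ (Fin n)) :
    EuclideanSpace ℝ {i : Fin n // i ∉ S} :=
  WithLp.toLp 2 (fun j : {i : Fin n // i ∉ S} => β j.1)

/-- Matrix-vector multiplication as a map between Euclidean spaces. -/
def mulVecE {m n : ℕ} (X : Matrix (Fin m) (Fin n) ℝ) (β : EuclideanSpace ℝ (Fin n)) :
    EuclideanSpace ℝ (Fin m) :=
  WithLp.toLp 2 (X.mulVec β)

open Filter Topology Set

variable {E : Type*}

def IsSubgradient [NormedAddCommGroup E] [InnerProductSpace ℝ E] (f : E → ℝ) (x v : E) : Prop :=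
  ∀ y, ⟪v, y - x⟫ ≤ f y - f x

def IsDStationary [AddCommGroup E] [Module ℝ E] (f : E → ℝ) (x : E) : Prop :=
  ∀ d : E, ∃ L : ℝ, 0 ≤ L ∧
    Tendsto (fun t : ℝ => (f (x + t • d) - f x) / t) (𝓝[>] 0) (𝓝 L)

lemma IsNorm.convexOn [AddCommGroup E] [Module ℝ E] {p : E → ℝ} (hp : IsNorm p) :
    ConvexOn ℝ univ p := by
  refine ⟨convex_univ, fun x _ y _ a b ha hb _ => ?_⟩
  calc p (a • x + b • y) ≤ p (a • x) + p (b • y) := hp.1 _ _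
    _ = a • p x + b • p y := by
      rw [hp.2.1, hp.2.1, abs_of_nonneg ha, abs_of_nonneg hb, smul_eq_mul, smul_eq_mul]

lemma convexOn_norm_linearMap_sub {F : Type*} [AddCommGroup E] [Module ℝ E]
    [NormedAddCommGroup F] [NormedSpace ℝ F] (A : E →ₗ[ℝ] F) (b : F) :
    ConvexOn ℝ univ (fun x => ‖A x - b‖) :=
  (convexOn_norm convex_univ).comp_affineMap (A.toAffineMap - AffineMap.const ℝ E b)

lemma ConvexOn.comp_line [AddCommGroup E] [Module ℝ E] {f : E → ℝ}
    (hf : ConvexOn ℝ univ f) (x d : E) :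
    ConvexOn ℝ univ (fun t : ℝ => f (x + t • d)) :=
  (hf.translate_right x).comp_linearMap (LinearMap.toSpanSingleton ℝ E d)

lemma slope_comp_line_zero [AddCommGroup E] [Module ℝ E] (f : E → ℝ) (x d : E) :
    slope (fun t : ℝ => f (x + t • d)) 0 = fun t => (f (x + t • d) - f x) / t := by
  ext t
  simp [slope_def_field]

lemma ConvexOn.exists_tendsto_directional_quotient [AddCommGroup E] [Module ℝ E] {f : E → ℝ}
    (hf : ConvexOn ℝ univ f) (x d : E) :
    ∃ L : ℝ, (∀ t > 0, L ≤ (f (x + t • d) - f x) / t) ∧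
      Tendsto (fun t : ℝ => (f (x + t • d) - f x) / t) (𝓝[>] 0) (𝓝 L) := by
  have hF := hf.comp_line x d
  have hderiv := hF.hasDerivWithinAt_rightDeriv_of_mem_interior (by simp : (0 : ℝ) ∈ interior univ)
  rw [← slope_comp_line_zero]
  refine ⟨_, fun t ht => ?_, (hasDerivWithinAt_iff_tendsto_slope' (lt_irrefl 0)).1 hderiv⟩
  simpa only [slope_comp_line_zero] using
    hF.rightDeriv_le_slope trivial trivial ht hderiv.differentiableWithinAt

lemma DifferentiableAt.tendsto_directional_quotient [NormedAddCommGroup E] [InnerProductSpace ℝ E]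
    [CompleteSpace E] {f : E → ℝ} {x : E} (hf : DifferentiableAt ℝ f x) (d : E) :
    Tendsto (fun t : ℝ => (f (x + t • d) - f x) / t) (𝓝[>] 0) (𝓝 ⟪gradient f x, d⟫) := by
  have hline : HasDerivAt (fun t : ℝ => x + t • d) d 0 := by
    simpa using ((hasDerivAt_id (0 : ℝ)).smul_const d).const_add x
  have hcomp := hf.hasGradientAt.hasFDerivAt.comp_hasDerivAt_of_eq 0 hline (by simp)
  rw [← slope_comp_line_zero]
  exact (hasDerivAt_iff_tendsto_slope.1 hcomp).mono_left (nhdsWithin_mono 0 fun t ht => ne_of_gt ht)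

section InnerProductSpace

variable [NormedAddCommGroup E] [InnerProductSpace ℝ E] {c : E → ℝ} {x v : E}

lemma ConvexOn.isSubgradient_of_le_add_sq (hc : ConvexOn ℝ univ c)
    (h : ∀ d, ∃ K : ℝ, ∀ t > 0, t * ⟪v, d⟫ ≤ c (x + t • d) - c x + t ^ 2 * K) :
    IsSubgradient c x v := by
  intro y
  obtain ⟨K, hK⟩ := h (y - x)
  obtain ⟨L, hL_le, hL⟩ := hc.exists_tendsto_directional_quotient x (y - x)
  have hlow : Tendsto (fun t : ℝ => ⟪v, y - x⟫ - t * K) (𝓝[>] 0) (𝓝 ⟪v, y - x⟫) := by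
    have hcont : Continuous fun t : ℝ => ⟪v, y - x⟫ - t * K := by fun_prop
    simpa using (hcont.tendsto 0).mono_left nhdsWithin_le_nhds
  have hvL : ⟪v, y - x⟫ ≤ L := le_of_tendsto_of_tendsto hlow hL <|
    eventually_mem_nhdsWithin.mono fun t ht => by
      rw [le_div_iff₀ ht]
      linarith [hK t ht]
  have hL1 := hL_le 1 one_pos
  rw [one_smul, add_sub_cancel, div_one] at hL1
  linarith

variable [CompleteSpace E] {p : E → ℝ}

lemma ConvexOn.isDStationary_sub_iff_isSubgradient (hc : ConvexOn ℝ univ c)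
    (hp : DifferentiableAt ℝ p x) :
    IsDStationary (c - p) x ↔ IsSubgradient c x (gradient p x) := by
  have hlim : ∀ d L, Tendsto (fun t : ℝ => (c (x + t • d) - c x) / t) (𝓝[>] 0) (𝓝 L) →
      Tendsto (fun t : ℝ => ((c - p) (x + t • d) - (c - p) x) / t) (𝓝[>] 0)
        (𝓝 (L - ⟪gradient p x, d⟫)) := fun d L hL =>
    (hL.sub (hp.tendsto_directional_quotient d)).congr fun t => by simp only [Pi.sub_apply]; ring
  constructor
  · intro hstat y
    obtain ⟨L, hL_le, hL⟩ := hc.exists_tendsto_directional_quotient x (y - x)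
    obtain ⟨L', hL'_nonneg, hL'⟩ := hstat (y - x)
    have hL'_eq := tendsto_nhds_unique hL' (hlim _ _ hL)
    have hL1 := hL_le 1 one_pos
    rw [one_smul, add_sub_cancel, div_one] at hL1
    linarith
  · intro hsub d
    obtain ⟨L, -, hL⟩ := hc.exists_tendsto_directional_quotient x d
    refine ⟨L - ⟪gradient p x, d⟫, sub_nonneg.2 ?_, hlim d L hL⟩
    refine ge_of_tendsto hL (eventually_mem_nhdsWithin.mono fun t ht => ?_)
    have := hsub (x + t • d)
    rw [add_sub_cancel_left, inner_smul_right] at this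
    rw [le_div_iff₀ ht]
    linarith

end InnerProductSpace

theorem dStationary_iff_pmm_minimizer_general {m n : ℕ} (X : Matrix (Fin m) (Fin n) ℝ)
    (b : EuclideanSpace ℝ (Fin m)) (lam : ℝ) (hlam : 0 < lam)
    (p1 : EuclideanSpace ℝ (Fin n) → ℝ) (hp1 : IsNorm p1)
    (p2 : EuclideanSpace ℝ (Fin n) → ℝ)
    (hp2diff : ∀ x, DifferentiableAt ℝ p2 x)
    (g : EuclideanSpace ℝ (Fin n) → ℝ)
    (hg : ∀ β, g β = ‖mulVecE X β - b‖ + lam * p1 β - p2 β)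
    (βbar : EuclideanSpace ℝ (Fin n))
    (h : ℝ → ℝ → EuclideanSpace ℝ (Fin n) → ℝ)
    (hh : ∀ (σ τ : ℝ) (β : EuclideanSpace ℝ (Fin n)),
      h σ τ β = ‖mulVecE X β - b‖ + lam * p1 β - p2 βbar -
        ⟪gradient p2 βbar, β - βbar⟫ + σ / 2 * ‖β - βbar‖ ^ 2 +
        τ / 2 * ‖mulVecE X β - mulVecE X βbar‖ ^ 2) :
    (∀ d : EuclideanSpace ℝ (Fin n), ∃ L : ℝ, 0 ≤ L ∧
        Filter.Tendsto (fun t : ℝ => (g (βbar + t • d) - g βbar) / t)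
          (nhdsWithin 0 (Set.Ioi 0)) (nhds L)) ↔
      ∃ σ τ : ℝ, 0 ≤ σ ∧ 0 ≤ τ ∧
        ∀ β : EuclideanSpace ℝ (Fin n), h σ τ βbar ≤ h σ τ β := by
  set A := Matrix.toEuclideanLin X
  set c : EuclideanSpace ℝ (Fin n) → ℝ := fun β => ‖A β - b‖ + lam * p1 β
  have hc : ConvexOn ℝ univ c :=
    (convexOn_norm_linearMap_sub A b).add (hp1.convexOn.smul hlam.le)
  have hgc : g = c - p2 := funext hg
  change IsDStationary g βbar ↔ _
  rw [hgc, hc.isDStationary_sub_iff_isSubgradient (hp2diff βbar)]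
  have hhc : ∀ σ τ β, h σ τ β = c β - p2 βbar - ⟪gradient p2 βbar, β - βbar⟫ +
      σ / 2 * ‖β - βbar‖ ^ 2 + τ / 2 * ‖A (β - βbar)‖ ^ 2 := fun σ τ β => by
    rw [hh, map_sub]
    rfl
  simp only [hhc, sub_self, map_zero, norm_zero, inner_zero_right]
  constructor
  · intro hsub
    refine ⟨0, 0, le_rfl, le_rfl, fun β => ?_⟩
    linarith [hsub β]
  · rintro ⟨σ, τ, -, -, hmin⟩
    refine hc.isSubgradient_of_le_add_sq fun d =>
      ⟨σ / 2 * ‖d‖ ^ 2 + τ / 2 * ‖A d‖ ^ 2, fun t ht => ?_⟩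
    have := hmin (βbar + t • d)
    simp only [add_sub_cancel_left, map_smul, inner_smul_right, norm_smul, mul_pow,
      Real.norm_eq_abs, sq_abs] at this
    linarith

/-- `β̄` is a d-stationary point of `g` iff it is a global minimizer of
the proximal majorization `h(·; σ, τ, β̄)` for some `σ, τ ≥ 0`. -/
theorem dStationary_iff_pmm_minimizer {m n : ℕ} (X : Matrix (Fin m) (Fin n) ℝ)
    (b : EuclideanSpace ℝ (Fin m)) (lam : ℝ) (hlam : 0 < lam)
    (p1 : EuclideanSpace ℝ (Fin n) → ℝ) (hp1 : IsNorm p1)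
    (p2 : EuclideanSpace ℝ (Fin n) → ℝ) (hp2conv : ConvexOn ℝ Set.univ p2)
    (hp2diff : ∀ x, DifferentiableAt ℝ p2 x)
    (g : EuclideanSpace ℝ (Fin n) → ℝ)
    (hg : ∀ β, g β = ‖mulVecE X β - b‖ + lam * p1 β - p2 β)
    (βbar : EuclideanSpace ℝ (Fin n))
    (h : ℝ → ℝ → EuclideanSpace ℝ (Fin n) → ℝ)
    (hh : ∀ (σ τ : ℝ) (β : EuclideanSpace ℝ (Fin n)),
      h σ τ β = ‖mulVecE X β - b‖ + lam * p1 β - p2 βbar -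
        ⟪gradient p2 βbar, β - βbar⟫ + σ / 2 * ‖β - βbar‖ ^ 2 +
        τ / 2 * ‖mulVecE X β - mulVecE X βbar‖ ^ 2) :
    (∀ d : EuclideanSpace ℝ (Fin n), ∃ L : ℝ, 0 ≤ L ∧
        Filter.Tendsto (fun t : ℝ => (g (βbar + t • d) - g βbar) / t)
          (nhdsWithin 0 (Set.Ioi 0)) (nhds L)) ↔
      ∃ σ τ : ℝ, 0 ≤ σ ∧ 0 ≤ τ ∧
        ∀ β : EuclideanSpace ℝ (Fin n), h σ τ βbar ≤ h σ τ β :=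
  dStationary_iff_pmm_minimizer_general X b lam hlam p1 hp1 p2 hp2diff g hg βbar h hh
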